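/- Let F ∈ R^(l×m) with full row rank l over R = k[z₁,…,zₙ]. Then the quotient module of the row module of F by the ideal of all maximal minors equals the quotient by their gcd: ρ(F) : I_l(F) = ρ(F) : d_l(F), where I_l(F) is the ideal generated by all l×l minors and d_l(F) is their gcd. -/

import Mathlib

open Matrix

/-- The set of `i × i` minors of a matrix. -/
def minorsSet {R : Type*} [CommRing R] {l m : ℕ} (F : Matrix (Fin l) (Fin m) R)
    (i : ℕ) : Set R :=
  {x | ∃ (ri : Fin i ↪ Fin l) (ci : Fin i ↪ Fin m), x = (F.submatrix ri ci).det}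

/-- `d` is a greatest common divisor of the `i × i` minors of `F`. -/
def IsGcdOfMinors {R : Type*} [CommRing R] {l m : ℕ} (F : Matrix (Fin l) (Fin m) R)
    (i : ℕ) (d : R) : Prop :=
  (∀ x ∈ minorsSet F i, d ∣ x) ∧ ∀ c : R, (∀ x ∈ minorsSet F i, c ∣ x) → c ∣ d

/-- The row module `ρ(F)` of a matrix. -/
def rowSpan {R : Type*} [CommRing R] {l m : ℕ} (F : Matrix (Fin l) (Fin m) R) :
    Submodule R (Fin m → R) :=
  Submodule.span R (Set.range fun i : Fin l => F i)

/-! Some maximal minor `s₀` of `F` is nonzero, so the rows of `F` are independent. If every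
maximal minor `s` satisfies `s • u ∈ ρ(F)`, write `s₀ • u = w₀ F`; comparing the two
representations of `s₀ s • u` gives `s₀ ∣ s * w₀ i`. Hence the reduced denominator of each
coordinate of `w₀ / s₀` divides every maximal minor, so it divides their gcd `d`, and
`d • u = (d • w₀ / s₀) F ∈ ρ(F)`. Conversely `d` divides every minor. -/

theorem dvd_mul_of_forall_dvd_mul {R : Type*} [CommMonoidWithZero R]
    [UniqueFactorizationMonoid R] {S : Set R} {a b d : R} (hb : b ≠ 0)
    (h : ∀ s ∈ S, b ∣ s * a) (hd : ∀ c, (∀ s ∈ S, c ∣ s) → c ∣ d) : b ∣ d * a := by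
  obtain ⟨a', b', c, hrel, rfl, rfl⟩ := UniqueFactorizationMonoid.exists_reduced_factors' a b hb
  have hb' : ∀ s ∈ S, b' ∣ s := fun s hs => hrel.symm.dvd_of_dvd_mul_right <|
    (mul_dvd_mul_iff_left (left_ne_zero_of_mul hb)).1 (mul_left_comm s c a' ▸ h s hs)
  rw [mul_left_comm]
  exact mul_dvd_mul_left c (dvd_mul_of_dvd_left (hd b' hb') a')

theorem forall_mem_ideal_span_smul_mem_iff {R M : Type*} [CommSemiring R] [AddCommMonoid M]
    [Module R M] (N : Submodule R M) (S : Set R) (u : M) :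
    (∀ g ∈ Ideal.span S, g • u ∈ N) ↔ ∀ s ∈ S, s • u ∈ N :=
  Ideal.span_le (I := N.comap (LinearMap.toSpanSingleton R M u))

theorem mem_rowSpan_iff {R : Type*} [CommRing R] {l m : ℕ}
    (F : Matrix (Fin l) (Fin m) R) (x : Fin m → R) :
    x ∈ rowSpan F ↔ ∃ c : Fin l → R, c ᵥ* F = x := by
  rw [rowSpan, Submodule.mem_span_range_iff_exists_fun]
  simp_rw [← Matrix.vecMul_eq_sum]

theorem vecMul_injective_of_det_submatrix_ne_zero {R ι κ : Type*} [CommRing R] [IsDomain R]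
    [Fintype ι] [DecidableEq ι] [Fintype κ] {F : Matrix ι κ R} {c : ι → κ}
    (h : (F.submatrix id c).det ≠ 0) : Function.Injective F.vecMul := by
  intro x y hxy
  rw [← sub_eq_zero]
  refine eq_zero_of_vecMul_eq_zero h ?_
  ext j
  simpa [vecMul, dotProduct, sub_mul, sub_eq_zero] using congrFun hxy (c j)

theorem exists_det_submatrix_ne_zero_of_rank_eq {K : Type*} [Field K] {l m : ℕ}
    (G : Matrix (Fin l) (Fin m) K) (h : G.rank = l) :
    ∃ c : Fin l ↪ Fin m, (G.submatrix id c).det ≠ 0 := by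
  obtain ⟨κ, a, ha, hspan, hli⟩ := exists_linearIndependent' K G.col
  have htop : Submodule.span K (Set.range (G.col ∘ a)) = ⊤ := by
    rw [hspan]
    refine Submodule.eq_top_of_finrank_eq ?_
    rw [← G.rank_eq_finrank_span_cols, h, Module.finrank_fin_fun]
  let b := Module.Basis.mk hli htop.ge
  let := FiniteDimensional.fintypeBasisIndex b
  have hcard : Fintype.card κ = l := by
    rw [← Module.finrank_eq_card_basis b, Module.finrank_fin_fun]
  let e := (Fintype.equivFinOfCardEq hcard).symm
  refine ⟨⟨a ∘ e, ha.comp e.injective⟩, ?_⟩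
  refine (isUnit_iff_isUnit_det _).1 (linearIndependent_cols_iff_isUnit.1 ?_) |>.ne_zero
  exact hli.comp e e.injective

theorem exists_det_submatrix_ne_zero_of_rank_map_eq {R K : Type*} [CommRing R] [Field K]
    (f : R →+* K) {l m : ℕ} (F : Matrix (Fin l) (Fin m) R) (h : (F.map f).rank = l) :
    ∃ c : Fin l ↪ Fin m, (F.submatrix id c).det ≠ 0 := by
  obtain ⟨c, hc⟩ := exists_det_submatrix_ne_zero_of_rank_eq _ h
  refine ⟨c, fun h0 => hc ?_⟩
  rw [submatrix_map, ← RingHom.mapMatrix_apply, ← RingHom.map_det, h0, map_zero]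

theorem gcd_smul_mem_rowSpan_of_forall_smul_mem {R : Type*} [CommRing R] [IsDomain R]
    [UniqueFactorizationMonoid R] {l m : ℕ} {F : Matrix (Fin l) (Fin m) R}
    (hF : Function.Injective F.vecMul) {S : Set R} {s₀ : R} (hs₀ : s₀ ∈ S) (hs₀0 : s₀ ≠ 0)
    {d : R} (hd : ∀ c, (∀ s ∈ S, c ∣ s) → c ∣ d) {u : Fin m → R}
    (hu : ∀ s ∈ S, s • u ∈ rowSpan F) : d • u ∈ rowSpan F := by
  choose w hw using fun s (hs : s ∈ S) => (mem_rowSpan_iff F _).1 (hu s hs)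
  have hcross : ∀ s (hs : s ∈ S), s • w s₀ hs₀ = s₀ • w s hs := fun s hs =>
    hF (by simp only [smul_vecMul, hw, smul_comm s s₀ u])
  choose t ht using fun i => dvd_mul_of_forall_dvd_mul (a := w s₀ hs₀ i) hs₀0
    (fun s hs => ⟨w s hs i, congrFun (hcross s hs) i⟩) hd
  refine (mem_rowSpan_iff F _).2 ⟨t, smul_right_injective _ hs₀0 ?_⟩
  calc s₀ • t ᵥ* F = (d • w s₀ hs₀) ᵥ* F := by
        rw [← smul_vecMul]; congr 1; ext i; exact (ht i).symm
    _ = s₀ • d • u := by rw [smul_vecMul, hw, smul_comm]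

theorem quotient_by_minors_ideal_eq_quotient_by_gcd_general
    {k : Type*} [Field k] (n l m : ℕ)
    (F : Matrix (Fin l) (Fin m) (MvPolynomial (Fin n) k))
    (hrank : (F.map (algebraMap (MvPolynomial (Fin n) k)
      (FractionRing (MvPolynomial (Fin n) k)))).rank = l)
    (d : MvPolynomial (Fin n) k) (hd : IsGcdOfMinors F l d) :
    {u : Fin m → MvPolynomial (Fin n) k |
        ∀ g ∈ Ideal.span (minorsSet F l), g • u ∈ rowSpan F} =
      {u : Fin m → MvPolynomial (Fin n) k | d • u ∈ rowSpan F} := by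
  obtain ⟨c, hc⟩ := exists_det_submatrix_ne_zero_of_rank_map_eq _ F hrank
  ext u
  simp only [Set.mem_ofPred_eq, forall_mem_ideal_span_smul_mem_iff]
  refine ⟨gcd_smul_mem_rowSpan_of_forall_smul_mem (vecMul_injective_of_det_submatrix_ne_zero hc)
    (S := minorsSet F l) ⟨.refl _, c, rfl⟩ hc hd.2, fun hu s hs => ?_⟩
  obtain ⟨e, rfl⟩ := hd.1 s hs
  rw [mul_comm, mul_smul]
  exact (rowSpan F).smul_mem e hu

/-- For `F ∈ R^(l×m)` of full row rank over `R = k[z₁,…,zₙ]`,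
`ρ(F) : I_l(F) = ρ(F) : d_l(F)`, where `I_l(F)` is the ideal generated by all `l × l`
minors and `d_l(F)` is their gcd. -/
theorem quotient_by_minors_ideal_eq_quotient_by_gcd
    {k : Type*} [Field k] (n l m : ℕ) (hlm : l ≤ m)
    (F : Matrix (Fin l) (Fin m) (MvPolynomial (Fin n) k))
    (hrank : (F.map (algebraMap (MvPolynomial (Fin n) k)
      (FractionRing (MvPolynomial (Fin n) k)))).rank = l)
    (d : MvPolynomial (Fin n) k) (hd : IsGcdOfMinors F l d) :
    {u : Fin m → MvPolynomial (Fin n) k |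
        ∀ g ∈ Ideal.span (minorsSet F l), g • u ∈ rowSpan F} =
      {u : Fin m → MvPolynomial (Fin n) k | d • u ∈ rowSpan F} :=
  quotient_by_minors_ideal_eq_quotient_by_gcd_general n l m F hrank d hd
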